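/- arXiv:2410.14199 — 2 statements merged into one kernel-verified Lean document; each statement's English description precedes it below -/
import Mathlib

section
/- Let E be a finite linearly ordered set and let S_1, S_2 ⊆ E with S_1 ◁ S_2 and S_2 ◁ S_1, where S ◁ T means S is an initial segment of S ∪ T and (S \ {max S}) ∪ T ⊊ S ∪ T. Then a contradiction follows; i.e. the relation ◁ is asymmetric. -/
/-- `S ◁ T`: `S` is nonempty, `S` is an initial segment of `S ∪ T` (every element of
`S ∪ T` that is `≤ max S` lies in `S`), and `(S \ {max S}) ∪ T ⊊ S ∪ T`. -/
def Tri {E : Type*} [LinearOrder E] (S T : Finset E) : Prop :=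
  S.Nonempty ∧ ∀ m ∈ S, (∀ y ∈ S, y ≤ m) →
    (∀ x ∈ S ∪ T, x ≤ m → x ∈ S) ∧ S.erase m ∪ T ⊂ S ∪ T

/-! If `S ◁ T` and `T ◁ S`, the smaller of the two maxima lies in the other set, since that set is
an initial segment of the union; but the maximum of `S` cannot lie in `T`, as otherwise removing it
from `S` would not shrink `S ∪ T`. -/

namespace Tri

variable {E : Type*} [LinearOrder E] {S T : Finset E}

theorem max'_notMem (h : Tri S T) : S.max' h.1 ∉ T := fun hmem =>
  ((h.2 _ (S.max'_mem h.1) (S.le_max' · ·)).2.ne) (Finset.erase_union_of_mem hmem S)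

theorem mem_of_le_max' (h : Tri S T) {x : E} (hx : x ∈ T) (hle : x ≤ S.max' h.1) : x ∈ S :=
  (h.2 _ (S.max'_mem h.1) (S.le_max' · ·)).1 x (Finset.mem_union_right S hx) hle

theorem asymm (hST : Tri S T) (hTS : Tri T S) : False := by
  rcases le_total (S.max' hST.1) (T.max' hTS.1) with hle | hle
  · exact hST.max'_notMem (hTS.mem_of_le_max' (S.max'_mem _) hle)
  · exact hTS.max'_notMem (hST.mem_of_le_max' (T.max'_mem _) hle)

end Tri

theorem stmt7_general {E : Type*} [LinearOrder E] (S₁ S₂ : Finset E)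
    (h12 : Tri S₁ S₂) (h21 : Tri S₂ S₁) : False :=
  h12.asymm h21

/-- The relation `◁` is asymmetric: `S₁ ◁ S₂` and `S₂ ◁ S₁` yield a contradiction. -/
theorem stmt7 {E : Type*} [Fintype E] [LinearOrder E] (S₁ S₂ : Finset E)
    (h₁ : S₁.Nonempty) (h₂ : S₂.Nonempty)
    (h12 : Tri S₁ S₂) (h21 : Tri S₂ S₁) : False :=
  stmt7_general S₁ S₂ h12 h21
end

section
/- For every finite linearly ordered set E of cardinality n and every bijection σ : {1,...,n} → E, the number of descents of σ equals the cardinality of the set { S(σ,i) : i ∈ Des(σ) }, where S(σ,i) = { σ(j) : j ≥ i, σ(j) ≤ σ(i) }; i.e. the map i ↦ S(σ,i) is injective on descents. -/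
/-- `S(σ, i) = { σ l : l ≥ i, σ l ≤ σ i }` as a Finset. -/
def sSet {E : Type*} [LinearOrder E] {n : ℕ} (σ : Fin n → E) (i : Fin n) : Finset E :=
  Finset.image σ (Finset.univ.filter (fun l => i ≤ l ∧ σ l ≤ σ i))

/-- The Finset of descents of `σ : Fin n → E`. -/
def desSet {E : Type*} [LinearOrder E] {n : ℕ} (σ : Fin n → E) : Finset (Fin n) :=
  Finset.univ.filter (fun i => ∃ h : (i : ℕ) + 1 < n, σ ⟨(i : ℕ) + 1, h⟩ < σ i)

section

variable {E : Type*} [LinearOrder E] {n : ℕ} (σ : Fin n → E)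

lemma self_mem_sSet (i : Fin n) : σ i ∈ sSet σ i :=
  Finset.mem_image_of_mem σ (by simp)

lemma le_of_mem_sSet {i : Fin n} {x : E} (hx : x ∈ sSet σ i) : x ≤ σ i := by
  obtain ⟨l, hl, rfl⟩ := Finset.mem_image.mp hx
  exact (Finset.mem_filter.mp hl).2.2

lemma sSet_injective (hσ : Function.Injective σ) : Function.Injective (sSet σ) := by
  intro i j h
  apply hσ
  apply le_antisymm
  · exact le_of_mem_sSet σ (h ▸ self_mem_sSet σ i)
  · exact le_of_mem_sSet σ (h ▸ self_mem_sSet σ j)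

end

theorem stmt11_general {E : Type*} [LinearOrder E] (n : ℕ)
    (σ : Fin n → E) (hσ : Function.Bijective σ) :
    (Finset.image (sSet σ) (desSet σ)).card = (desSet σ).card :=
  Finset.card_image_of_injective _ (sSet_injective σ hσ.injective)

/-- For a bijection `σ : Fin n → E`, the number of descents of `σ` equals the number
of distinct sets `S(σ,i)` for `i` a descent; i.e. `i ↦ S(σ,i)` is injective on the
descents. -/
theorem stmt11 {E : Type*} [Fintype E] [LinearOrder E] (n : ℕ)
    (σ : Fin n → E) (hσ : Function.Bijective σ) :
    (Finset.image (sSet σ) (desSet σ)).card = (desSet σ).card :=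
  stmt11_general n σ hσ
end
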